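/- arXiv:1907.04804 — 3 statements merged into one kernel-verified Lean document; each statement's English description precedes it below -/
import Mathlib

section
/- If H is a path or a three-legged spider (three internally disjoint paths meeting at a common endpoint), then every graph G containing H as a minor also contains H as a subgraph. -/
/-- `H` is a minor of `G`, via disjoint nonempty connected branch sets. -/
def SimpleGraph.IsMinorOf {W V : Type*} (H : SimpleGraph W) (G : SimpleGraph V) : Prop :=
  ∃ S : W → Set V, (∀ w, (S w).Nonempty) ∧
    (Pairwise fun w₁ w₂ => Disjoint (S w₁) (S w₂)) ∧
    (∀ w, (G.induce (S w)).Connected) ∧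
    (∀ ⦃w₁ w₂⦄, H.Adj w₁ w₂ → ∃ u ∈ S w₁, ∃ v ∈ S w₂, G.Adj u v)

/-- `G` contains a copy of `H` as a subgraph: an injective map preserving adjacency. -/
def ContainsCopy {W V : Type*} (H : SimpleGraph W) (G : SimpleGraph V) : Prop :=
  ∃ f : W → V, Function.Injective f ∧ ∀ ⦃a b : W⦄, H.Adj a b → G.Adj (f a) (f b)

/-- `H` is a path graph (isomorphic to some `pathGraph n`). -/
def IsPathGraph {W : Type*} (H : SimpleGraph W) : Prop :=
  ∃ n : ℕ, Nonempty (H ≃g SimpleGraph.pathGraph n)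

/-- `H` is a three-legged spider: a tree with exactly one vertex of degree `3`,
all other vertices having degree at most `2` (three internally disjoint paths
meeting at a common endpoint). -/
def IsThreeLeggedSpider {W : Type*} [Fintype W] (H : SimpleGraph W) [DecidableRel H.Adj] :
    Prop :=
  H.IsAcyclic ∧ H.Connected ∧ ∃ c : W, H.degree c = 3 ∧ ∀ v : W, v ≠ c → H.degree v ≤ 2

/-!
A path of `H` lifts to a path of `G` that is at least as long: walk through the branch set of
each vertex, which induces a connected subgraph, and cross to the next branch set along an edge of
the model. The branch sets are disjoint, so no vertex is repeated. This gives the case of a path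
graph.

A three-legged spider is the union of three paths from its centre `c`, its legs, which share
only `c`. The leg towards a neighbour `n` of `c` ends at a vertex farthest from `c` in the direction
of `n`; it passes through every vertex in that direction, because a vertex of degree at most two
cannot branch. Lift each leg to a path of `G` that starts at a point `aᵢ` of the branch set of `c`
and leaves that set at once; lifts of different legs run through disjoint branch sets. The branch
set of `c` is connected, so it contains a vertex joined to `a₀, a₁, a₂` by three paths sharing
only that vertex (three points always admit one, four need not). This gives a spider in `G` with
legs at least as long as those of `H`, and `H` embeds into it leg by leg.
-/

namespace SimpleGraph

variable {V W : Type*} {G : SimpleGraph V} {H : SimpleGraph W}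

namespace Walk

lemma IsPath.append {u v w : V} {p : G.Walk u v} {q : G.Walk v w} (hp : p.IsPath)
    (hq : q.IsPath) (hpq : ∀ x ∈ p.support, x ∉ q.support.tail) : (p.append q).IsPath := by
  rw [isPath_def, support_append, List.nodup_append]
  refine ⟨hp.support_nodup, hq.support_nodup.sublist q.support.tail_sublist, ?_⟩
  rintro x hx _ hy rfl
  exact hpq x hx hy

lemma exists_mem_forall_mem_support_takeUntil [DecidableEq V] {u v : V} (p : G.Walk u v)
    {s : Set V} (hv : v ∈ s) : ∃ x ∈ s, ∃ hx : x ∈ p.support,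
      ∀ y ∈ (p.takeUntil x hx).support, y ∈ s → y = x := by
  classical
  have hne : ∃ n, ∃ x ∈ s, ∃ hx : x ∈ p.support, (p.takeUntil x hx).length = n :=
    ⟨_, v, hv, p.end_mem_support, rfl⟩
  obtain ⟨x, hxs, hx, hmin⟩ := Nat.find_spec hne
  refine ⟨x, hxs, hx, fun y hy hys => by_contra fun hyx => ?_⟩
  have hlt := length_takeUntil_lt_length hy hyx
  rw [takeUntil_takeUntil] at hlt
  exact (Nat.find_min hne (hmin ▸ hlt)) ⟨y, hys, _, rfl⟩

lemma IsPath.mem_support_of_adj_of_degree_le_two [DecidableEq W] {c t u v : W}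
    {T : H.Walk c t} (hT : T.IsPath) (hu : u ∈ T.support) (huc : u ≠ c) (hut : u ≠ t)
    [Fintype (H.neighborSet u)] (hdeg : H.degree u ≤ 2) (huv : H.Adj u v)
    (hv : v ∉ (T.takeUntil u hu).support) : v ∈ T.support := by
  have hp : ¬(T.takeUntil u hu).Nil := by simpa using huc.symm
  have hr : ¬(T.dropUntil u hu).Nil := fun h => hut h.eq
  have hdisj := (T.take_spec hu ▸ hT).disjoint_support_of_append hr
  rw [support_tail_of_not_nil _ hr] at hdisj
  by_contra hvT
  -- the neighbours of `u` just before and just after it on `T`, and `v`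
  have : 2 < H.degree u := by
    rw [← card_neighborFinset_eq_degree, Finset.two_lt_card]
    refine ⟨(T.takeUntil u hu).penultimate,
      by simpa using ((T.takeUntil u hu).adj_penultimate hp).symm,
      (T.dropUntil u hu).snd, by simpa using (T.dropUntil u hu).adj_snd hr, v, by simpa using huv,
      fun h => hdisj (getVert_mem_support _ _) (h ▸ snd_mem_tail_support hr),
      fun h => hv (h ▸ getVert_mem_support _ _),
      fun h => hvT (h ▸ T.support_dropUntil_subset_support hu (getVert_mem_support _ _))⟩
  omega

end Walk

structure IsSpider {ι : Type*} {c : V} {t : ι → V} (Q : ∀ i, G.Walk c (t i)) : Prop where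
  isPath : ∀ i, (Q i).IsPath
  eq_of_mem_support : ∀ ⦃i j⦄, i ≠ j → ∀ ⦃v⦄, v ∈ (Q i).support → v ∈ (Q j).support → v = c

namespace IsSpider

variable {ι : Type*} {c : V} {t : ι → V} {Q : ∀ i, G.Walk c (t i)}

lemma comp (hQ : IsSpider Q) {κ : Type*} {e : κ → ι} (he : Function.Injective e) :
    IsSpider fun k => Q (e k) :=
  ⟨fun k => hQ.isPath (e k), fun _ _ hkl => hQ.eq_of_mem_support (he.ne hkl)⟩

lemma map (hQ : IsSpider Q) {V' : Type*} {G' : SimpleGraph V'} (f : G →g G')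
    (hf : Function.Injective f) : IsSpider fun i => (Q i).map f := by
  refine ⟨fun i => (hQ.isPath i).map hf, fun i j hij v hvi hvj => ?_⟩
  simp only [Walk.support_map, List.mem_map] at hvi hvj
  obtain ⟨y, hyi, rfl⟩ := hvi
  obtain ⟨z, hzj, hzy⟩ := hvj
  obtain rfl := hf hzy
  rw [hQ.eq_of_mem_support hij hyi hzj]

lemma getVert_eq_getVert_iff (hQ : IsSpider Q) {i j : ι} {m n : ℕ} (hm : m ≤ (Q i).length)
    (hn : n ≤ (Q j).length) :
    (Q i).getVert m = (Q j).getVert n ↔ m = 0 ∧ n = 0 ∨ i = j ∧ m = n := by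
  constructor
  · intro h
    by_cases hij : i = j
    · subst hij
      exact Or.inr ⟨rfl, (hQ.isPath i).getVert_injOn hm hn h⟩
    · have hc := hQ.eq_of_mem_support hij ((Q i).getVert_mem_support m)
        (h ▸ (Q j).getVert_mem_support n)
      refine Or.inl ⟨((hQ.isPath i).getVert_eq_start_iff hm).mp hc, ?_⟩
      exact ((hQ.isPath j).getVert_eq_start_iff hn).mp (h ▸ hc)
  · rintro (⟨rfl, rfl⟩ | ⟨rfl, rfl⟩) <;> simp

lemma append (hQ : IsSpider Q) {T : Set V} (hQT : ∀ i, ∀ v ∈ (Q i).support, v ∈ T) {b : ι → V}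
    {R : ∀ i, G.Walk (t i) (b i)} (hR : ∀ i, (R i).IsPath)
    (hRT : ∀ i, ∀ v ∈ (R i).support.tail, v ∉ T)
    (hRR : ∀ ⦃i j⦄, i ≠ j → ∀ v ∈ (R i).support.tail, v ∉ (R j).support.tail) :
    IsSpider fun i => (Q i).append (R i) := by
  refine ⟨fun i => (hQ.isPath i).append (hR i) fun v hv hv' => hRT i v hv' (hQT i v hv),
    fun i j hij v hvi hvj => ?_⟩
  rw [Walk.support_append, List.mem_append] at hvi hvj
  rcases hvi with hvi | hvi <;> rcases hvj with hvj | hvj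
  · exact hQ.eq_of_mem_support hij hvi hvj
  · exact absurd (hQT i v hvi) (hRT j v hvj)
  · exact absurd (hQT j v hvj) (hRT i v hvi)
  · exact absurd hvj (hRR hij v hvi)

end IsSpider

lemma isSpider_of_fin_three {x : V} {a : Fin 3 → V} {A : ∀ i, G.Walk x (a i)}
    (hA : ∀ i, (A i).IsPath) (h01 : ∀ v ∈ (A 0).support, v ∈ (A 1).support → v = x)
    (h02 : ∀ v ∈ (A 0).support, v ∈ (A 2).support → v = x)
    (h12 : ∀ v ∈ (A 1).support, v ∈ (A 2).support → v = x) : IsSpider A := by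
  refine ⟨hA, fun i j hij v hi hj => ?_⟩
  fin_cases i <;> fin_cases j <;>
    first
    | exact absurd rfl hij
    | exact h01 v hi hj | exact h02 v hi hj | exact h12 v hi hj
    | exact h01 v hj hi | exact h02 v hj hi | exact h12 v hj hi

lemma Connected.exists_isSpider (hG : G.Connected) (a : Fin 3 → V) :
    ∃ x, ∃ A : ∀ i, G.Walk x (a i), IsSpider A := by
  classical
  obtain ⟨p, hp⟩ := hG.exists_isPath (a 0) (a 1)
  obtain ⟨q, hq⟩ := hG.exists_isPath (a 2) (a 0)
  obtain ⟨x, hxp, hxq, hfirst⟩ :=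
    q.exists_mem_forall_mem_support_takeUntil (s := {v | v ∈ p.support}) p.start_mem_support
  have h01 : ∀ v ∈ (p.takeUntil x hxp).reverse.support, v ∈ (p.dropUntil x hxp).support →
      v = x := by
    have hnd := (p.take_spec hxp ▸ hp).support_nodup
    rw [Walk.support_append, List.nodup_append] at hnd
    intro v hv hv'
    rw [← Walk.cons_tail_support, List.mem_cons] at hv'
    rw [Walk.support_reverse, List.mem_reverse] at hv
    exact hv'.resolve_right fun h => hnd.2.2 v hv v h rfl
  have h02 : ∀ v ∈ (p.takeUntil x hxp).reverse.support,
      v ∈ (q.takeUntil x hxq).reverse.support → v = x := by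
    simp only [Walk.support_reverse, List.mem_reverse]
    exact fun v hv hv' => hfirst v hv' (p.support_takeUntil_subset_support hxp hv)
  have h12 : ∀ v ∈ (p.dropUntil x hxp).support,
      v ∈ (q.takeUntil x hxq).reverse.support → v = x := by
    simp only [Walk.support_reverse, List.mem_reverse]
    exact fun v hv hv' => hfirst v hv' (p.support_dropUntil_subset_support hxp hv)
  refine ⟨x, Fin.cons (p.takeUntil x hxp).reverse
    (Fin.cons (p.dropUntil x hxp) (Fin.cons (q.takeUntil x hxq).reverse finZeroElim)),
    isSpider_of_fin_three (fun i => ?_) h01 h02 h12⟩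
  fin_cases i
  exacts [(hp.takeUntil hxp).reverse, hp.dropUntil hxp, (hq.takeUntil hxq).reverse]

lemma exists_isSpider_of_connected_induce {s : Set V} (hs : (G.induce s).Connected)
    (a : Fin 3 → V) (ha : ∀ i, a i ∈ s) :
    ∃ x, ∃ A : ∀ i, G.Walk x (a i), IsSpider A ∧ ∀ i, ∀ v ∈ (A i).support, v ∈ s := by
  obtain ⟨x, A, hA⟩ := hs.exists_isSpider fun i => ⟨a i, ha i⟩
  refine ⟨x, fun i => (A i).map (Embedding.induce (G := G) s).toHom,
    hA.map _ (Embedding.induce (G := G) s).injective, fun i v hv => ?_⟩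
  obtain ⟨y, -, rfl⟩ := List.mem_map.mp ((A i).support_map _ ▸ hv)
  exact y.2

lemma exists_isPath_of_connected_induce {s : Set V} (hs : (G.induce s).Connected) {a b : V}
    (ha : a ∈ s) (hb : b ∈ s) : ∃ p : G.Walk a b, p.IsPath ∧ ∀ v ∈ p.support, v ∈ s := by
  obtain ⟨p, hp⟩ := hs.exists_isPath ⟨a, ha⟩ ⟨b, hb⟩
  refine ⟨p.map (Embedding.induce (G := G) s).toHom, hp.map (Embedding.induce (G := G) s).injective,
    fun v hv => ?_⟩
  obtain ⟨y, -, rfl⟩ := List.mem_map.mp (p.support_map _ ▸ hv)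
  exact y.2

structure IsMinorModel (H : SimpleGraph W) (G : SimpleGraph V) (S : W → Set V) : Prop where
  nonempty : ∀ w, (S w).Nonempty
  pairwise_disjoint : Pairwise fun w₁ w₂ => Disjoint (S w₁) (S w₂)
  connected : ∀ w, (G.induce (S w)).Connected
  exists_adj : ∀ ⦃w₁ w₂⦄, H.Adj w₁ w₂ → ∃ u ∈ S w₁, ∃ v ∈ S w₂, G.Adj u v

lemma IsMinorOf.exists_isMinorModel (h : H.IsMinorOf G) : ∃ S, IsMinorModel H G S :=
  let ⟨S, h₁, h₂, h₃, h₄⟩ := h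
  ⟨S, h₁, h₂, h₃, h₄⟩

namespace IsMinorModel

variable {S : W → Set V}

lemma eq_of_mem (hS : IsMinorModel H G S) {w₁ w₂ : W} {x : V} (h₁ : x ∈ S w₁)
    (h₂ : x ∈ S w₂) : w₁ = w₂ :=
  by_contra fun hne => Set.disjoint_left.mp (hS.pairwise_disjoint hne) h₁ h₂

lemma exists_isPath_lift_of_mem (hS : IsMinorModel H G S) {u v : W} {Q : H.Walk u v}
    (hQ : Q.IsPath) {a : V} (ha : a ∈ S u) :
    ∃ b, ∃ R : G.Walk a b, R.IsPath ∧ Q.length ≤ R.length ∧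
      ∀ x ∈ R.support, ∃ w ∈ Q.support, x ∈ S w := by
  induction Q generalizing a with
  | nil => exact ⟨a, .nil, .nil, le_rfl, by simpa using ha⟩
  | @cons u u' v h Q ih =>
    rw [Walk.cons_isPath_iff] at hQ
    obtain ⟨p, hp, a', ha', hpa'⟩ := hS.exists_adj h
    obtain ⟨b, R, hR, hlen, hRS⟩ := ih hQ.1 ha'
    obtain ⟨B, hB, hBS⟩ := exists_isPath_of_connected_induce (hS.connected u) ha hp
    have hRu : ∀ x ∈ R.support, x ∉ S u := fun x hx hxu => by
      obtain ⟨w, hw, hxw⟩ := hRS x hx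
      exact hQ.2 (hS.eq_of_mem hxu hxw ▸ hw)
    refine ⟨b, B.append (.cons hpa' R), hB.append (hR.cons fun h => hRu p h hp) ?_, ?_, ?_⟩
    · exact fun x hx hxR => hRu x hxR (hBS x hx)
    · simp only [Walk.length_append, Walk.length_cons]
      omega
    · intro x hx
      rw [Walk.support_append, Walk.support_cons, List.tail_cons, List.mem_append] at hx
      rcases hx with hx | hx
      · exact ⟨u, Walk.start_mem_support _, hBS x hx⟩
      · obtain ⟨w, hw, hxw⟩ := hRS x hx
        exact ⟨w, by simp [hw], hxw⟩

lemma exists_isPath_lift (hS : IsMinorModel H G S) {u v : W} {Q : H.Walk u v} (hQ : Q.IsPath) :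
    ∃ a ∈ S u, ∃ b, ∃ R : G.Walk a b, R.IsPath ∧ Q.length ≤ R.length ∧
      ∀ x ∈ R.support.tail, ∃ w ∈ Q.support.tail, x ∈ S w := by
  cases Q with
  | nil =>
    obtain ⟨a, ha⟩ := hS.nonempty u
    exact ⟨a, ha, a, .nil, .nil, le_rfl, by simp⟩
  | @cons _ u' _ h Q =>
    rw [Walk.cons_isPath_iff] at hQ
    obtain ⟨a, ha, a', ha', haa'⟩ := hS.exists_adj h
    obtain ⟨b, R, hR, hlen, hRS⟩ := hS.exists_isPath_lift_of_mem hQ.1 ha'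
    refine ⟨a, ha, b, .cons haa' R, hR.cons fun haR => ?_, by simpa using hlen, by simpa using hRS⟩
    obtain ⟨w, hw, haw⟩ := hRS a haR
    exact hQ.2 (hS.eq_of_mem ha haw ▸ hw)

lemma exists_isSpider (hS : IsMinorModel H G S) {c : W} {t : Fin 3 → W}
    {Q : ∀ i, H.Walk c (t i)} (hQ : IsSpider Q) :
    ∃ x, ∃ b : Fin 3 → V, ∃ L : ∀ i, G.Walk x (b i),
      IsSpider L ∧ ∀ i, (Q i).length ≤ (L i).length := by
  choose a ha b R hR hlen hRS using fun i => hS.exists_isPath_lift (hQ.isPath i)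
  obtain ⟨x, A, hA, hAS⟩ := exists_isSpider_of_connected_induce (hS.connected c) a ha
  have hc : ∀ i, c ∉ (Q i).support.tail := fun i =>
    (List.nodup_cons.mp ((Q i).cons_tail_support ▸ (hQ.isPath i).support_nodup)).1
  refine ⟨x, b, fun i => (A i).append (R i), hA.append hAS hR ?_ ?_, fun i => ?_⟩
  · intro i v hv hvc
    obtain ⟨w, hw, hvw⟩ := hRS i v hv
    exact hc i (hS.eq_of_mem hvc hvw ▸ hw)
  · intro i j hij v hvi hvj
    obtain ⟨w, hw, hvw⟩ := hRS i v hvi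
    obtain ⟨w', hw', hvw'⟩ := hRS j v hvj
    obtain rfl := hS.eq_of_mem hvw hvw'
    exact hc i (hQ.eq_of_mem_support hij (List.mem_of_mem_tail hw) (List.mem_of_mem_tail hw') ▸ hw)
  · simp only [Walk.length_append]
    exact (hlen i).trans (Nat.le_add_left _ _)

end IsMinorModel

theorem containsCopy_iff_isContained : ContainsCopy H G ↔ H ⊑ G :=
  ⟨fun ⟨f, hf, hadj⟩ => ⟨⟨⟨f, fun h => hadj h⟩, hf⟩⟩,
    fun ⟨f⟩ => ⟨f, f.injective, fun _ _ h => f.toHom.map_adj h⟩⟩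

lemma pathGraph.val_le_add_length {n : ℕ} {u v : Fin n} (p : (pathGraph n).Walk u v) :
    (v : ℕ) ≤ u + p.length := by
  induction p with
  | nil => simp
  | cons h p ih =>
    rw [pathGraph_adj] at h
    simp only [Walk.length_cons]
    omega

theorem _root_.IsPathGraph.containsCopy (hH : IsPathGraph H) (hminor : H.IsMinorOf G) :
    ContainsCopy H G := by
  obtain ⟨n, ⟨e⟩⟩ := hH
  obtain ⟨S, hS⟩ := hminor.exists_isMinorModel
  rw [containsCopy_iff_isContained, isContained_congr_left e]
  cases n with
  | zero => exact .of_isEmpty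
  | succ n =>
    obtain ⟨Q, hQ⟩ := (pathGraph_connected n).exists_isPath 0 (Fin.last n)
    obtain ⟨a, ha⟩ := hS.nonempty (e.symm 0)
    obtain ⟨b, R, hR, hlen, -⟩ :=
      hS.exists_isPath_lift_of_mem (hQ.map (f := e.symm.toHom) e.symm.injective) ha
    have hn : n ≤ R.length := by
      have := pathGraph.val_le_add_length Q
      rw [Walk.length_map] at hlen
      simp only [Fin.val_last, Fin.val_zero] at this
      omega
    have hP := (hR.take n).isContained_pathGraph
    rwa [Walk.take_length, min_eq_left hn] at hP

theorem containsCopy_of_isSpider {ι : Type*} [Nonempty ι] {c : W} {t : ι → W}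
    {Q : ∀ i, H.Walk c (t i)} (hQ : IsSpider Q) (hcover : ∀ w ≠ c, ∃ i, w ∈ (Q i).support)
    (hedges : ∀ a b, H.Adj a b → ∃ i, s(a, b) ∈ (Q i).edges) {x : V} {b : ι → V}
    {L : ∀ i, G.Walk x (b i)} (hL : IsSpider L) (hlen : ∀ i, (Q i).length ≤ (L i).length) :
    ContainsCopy H G := by
  have hpos : ∀ w, ∃ i, ∃ m ≤ (Q i).length, (Q i).getVert m = w := by
    intro w
    by_cases hw : w = c
    · exact ⟨Classical.arbitrary ι, 0, Nat.zero_le _, by simp [hw]⟩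
    · obtain ⟨i, hi⟩ := hcover w hw
      obtain ⟨m, rfl, hm⟩ := Walk.mem_support_iff_exists_getVert.mp hi
      exact ⟨i, m, hm, rfl⟩
  choose i m hm hw using hpos
  have key : ∀ {j k m' n'}, m' ≤ (Q j).length → n' ≤ (Q k).length →
      ((Q j).getVert m' = (Q k).getVert n' ↔ (L j).getVert m' = (L k).getVert n') :=
    fun hm' hn' => by
      rw [hQ.getVert_eq_getVert_iff hm' hn',
        hL.getVert_eq_getVert_iff (hm'.trans (hlen _)) (hn'.trans (hlen _))]
  have hf : ∀ j k, k ≤ (Q j).length → (L (i ((Q j).getVert k))).getVert (m ((Q j).getVert k)) =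
      (L j).getVert k := fun j k hk => (key (hm _) hk).mp (hw _)
  refine ⟨fun w => (L (i w)).getVert (m w), fun w₁ w₂ h => ?_, fun a₁ a₂ hadj => ?_⟩
  · rw [← hw w₁, ← hw w₂]
    exact (key (hm w₁) (hm w₂)).mpr h
  · obtain ⟨j, hj⟩ := hedges a₁ a₂ hadj
    obtain ⟨k, hk, hke⟩ := (Q j).mk_mem_edges_iff_exists.mp hj
    have hadjL := (L j).adj_getVert_succ (hk.trans_le (hlen j))
    rcases Sym2.eq_iff.mp hke with ⟨rfl, rfl⟩ | ⟨rfl, rfl⟩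
    · simpa only [hf j _ hk.le, hf j _ hk] using hadjL
    · simpa only [hf j _ hk.le, hf j _ hk] using hadjL.symm

lemma IsAcyclic.mem_support_of_snd_eq [DecidableEq W] [H.LocallyFinite] (hH : H.IsAcyclic)
    {c t : W} (hdeg : ∀ v ≠ c, H.degree v ≤ 2) {T : H.Walk c t} (hT : T.IsPath)
    (hmax : ∀ v (p : H.Walk c v), p.IsPath → p.snd = T.snd → p.length ≤ T.length)
    {v : W} {p : H.Walk c v} (hp : p.IsPath) (hpn : ¬p.Nil) (hsnd : p.snd = T.snd) :
    v ∈ T.support := by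
  obtain ⟨n, hlen⟩ : ∃ n, p.length = n + 1 :=
    ⟨_, (Nat.succ_pred_eq_of_pos (Walk.not_nil_iff_lt_length.mp hpn)).symm⟩
  induction n generalizing v p with
  | zero =>
    rw [← p.getVert_of_length_le hlen.le, show p.getVert 1 = T.snd from hsnd]
    exact T.getVert_mem_support 1
  | succ n ih =>
    obtain ⟨u, p, huv, rfl⟩ : ∃ u, ∃ p' : H.Walk c u, ∃ h : H.Adj u v, p = p'.concat h :=
      ⟨_, _, _, (Walk.concat_dropLast (p.adj_penultimate hpn)).symm⟩
    rw [Walk.concat_isPath_iff] at hp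
    rw [Walk.length_concat] at hlen
    have hsnd' : p.snd = T.snd := by
      rw [← hsnd]
      unfold Walk.snd
      rw [Walk.concat_eq_append, Walk.getVert_append']
      exact (if_pos (by omega)).symm
    -- `u` lies on `T` by induction and is neither of its ends, so `v` is the next vertex on `T`
    have huT := ih hp.1 (Walk.not_nil_iff_lt_length.mpr (by omega)) hsnd' (by omega)
    have heq : T.takeUntil u huT = p :=
      congrArg Subtype.val ((hH.subsingleton_path c u).elim ⟨_, hT.takeUntil huT⟩ ⟨p, hp.1⟩)
    have huc : u ≠ c := by
      rintro rfl
      have := (hp.1.getVert_eq_start_iff le_rfl).mp p.getVert_length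
      omega
    have hut : u ≠ t := by
      rintro rfl
      have := hmax v _ ((Walk.concat_isPath_iff huv).mpr hp) hsnd
      have := (hT.getVert_eq_end_iff (T.length_takeUntil_le_length huT)).mp
        (T.getVert_length_takeUntil huT)
      rw [Walk.length_concat, ← heq] at *
      omega
    exact hT.mem_support_of_adj_of_degree_le_two huT huc hut (hdeg u huc) huv (heq ▸ hp.2)

lemma IsTree.exists_mem_edges [DecidableEq W] (hH : H.IsTree) {ι : Type*} {c : W} {t : ι → W}
    {Q : ∀ i, H.Walk c (t i)} (hQ : ∀ i, (Q i).IsPath) (hcover : ∀ v ≠ c, ∃ i, v ∈ (Q i).support)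
    {a b : W} (hab : H.Adj a b) : ∃ i, s(a, b) ∈ (Q i).edges := by
  have key : ∀ a b (hab : H.Adj a b) (p : H.Walk c a), p.IsPath → b ∉ p.support →
      ∃ i, s(a, b) ∈ (Q i).edges := by
    intro a b hab p hp hb
    obtain ⟨i, hbi⟩ := hcover b fun h => hb (h ▸ p.start_mem_support)
    have heq : (Q i).takeUntil b hbi = p.concat hab := congrArg Subtype.val
      ((hH.isAcyclic.subsingleton_path c b).elim ⟨_, (hQ i).takeUntil hbi⟩ ⟨_, hp.concat hb hab⟩)
    refine ⟨i, (Q i).edges_takeUntil_subset_edges hbi ?_⟩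
    simp [heq, Walk.edges_concat]
  obtain ⟨p, hp⟩ := hH.connected.exists_isPath c a
  obtain ⟨q, hq⟩ := hH.connected.exists_isPath c b
  by_cases hb : b ∈ p.support
  · obtain ⟨i, hi⟩ := key b a hab.symm q hq
      (hH.isAcyclic.ne_mem_support_of_support_of_adj_of_isPath hp hq hab hb)
    exact ⟨i, Sym2.eq_swap ▸ hi⟩
  · exact key a b hab p hp hb

lemma IsTree.exists_isSpider [Fintype W] [DecidableRel H.Adj] (hH : H.IsTree) (c : W)
    (hdeg : ∀ v ≠ c, H.degree v ≤ 2) :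
    ∃ t : H.neighborSet c → W, ∃ Q : ∀ n, H.Walk c (t n),
      IsSpider Q ∧ ∀ v ≠ c, ∃ n, v ∈ (Q n).support := by
  classical
  choose P hP using fun v => hH.connected.exists_isPath c v
  have hPu : ∀ {v} (p : H.Walk c v), p.IsPath → p = P v := fun p hp =>
    congrArg Subtype.val ((hH.isAcyclic.subsingleton_path _ _).elim ⟨p, hp⟩ ⟨_, hP _⟩)
  have hsnd : ∀ v ≠ c, H.Adj c (P v).snd := fun v hv =>
    (P v).adj_snd (Walk.not_nil_of_ne hv.symm)
  -- the leg towards the neighbour `n` ends in a vertex `t n` farthest from `c` in that direction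
  have hfar : ∀ n : H.neighborSet c, ∃ t, (P t).snd = n ∧
      ∀ v, (P v).snd = n → (P v).length ≤ (P t).length := by
    intro n
    have hn : (P n).snd = n :=
      (hH.isAcyclic.eq_snd_of_adj_start (hP n) n.2 (P n).end_mem_support).symm
    obtain ⟨t, ht, hmax⟩ := (Finset.univ.filter fun v => (P v).snd = n).exists_max_image
      (fun v => (P v).length) ⟨n, by simpa using hn⟩
    exact ⟨t, by simpa using ht, fun v hv => hmax v (by simpa using hv)⟩
  choose t ht hmax using hfar
  have hdir : ∀ n, ∀ v ∈ (P (t n)).support, v ≠ c → (P v).snd = n := fun n v hv hvc => by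
    rw [← hPu _ ((hP _).takeUntil hv), Walk.snd_takeUntil hvc, ht]
  refine ⟨t, fun n => P (t n), ⟨fun n => hP _, fun n n' hnn' v hv hv' => ?_⟩, fun v hv => ?_⟩
  · by_contra hvc
    exact hnn' (Subtype.ext ((hdir n v hv hvc).symm.trans (hdir n' v hv' hvc)))
  · refine ⟨⟨_, hsnd v hv⟩, hH.isAcyclic.mem_support_of_snd_eq hdeg (hP _) ?_ (hP v)
      (Walk.not_nil_of_ne hv.symm) (ht ⟨_, hsnd v hv⟩).symm⟩
    intro w p hp hpt
    rw [hPu p hp] at hpt ⊢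
    exact hmax _ w (hpt.trans (ht _))

lemma _root_.IsThreeLeggedSpider.exists_isSpider [Fintype W] [DecidableRel H.Adj]
    (h : IsThreeLeggedSpider H) :
    ∃ c, ∃ t : Fin 3 → W, ∃ Q : ∀ i, H.Walk c (t i), IsSpider Q ∧
      (∀ v ≠ c, ∃ i, v ∈ (Q i).support) ∧ ∀ a b, H.Adj a b → ∃ i, s(a, b) ∈ (Q i).edges := by
  classical
  obtain ⟨hac, hconn, c, hc, hdeg⟩ := h
  have hH : H.IsTree := ⟨hconn, hac⟩
  obtain ⟨t, Q, hQ, hcover⟩ := hH.exists_isSpider c hdeg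
  let e : Fin 3 ≃ H.neighborSet c :=
    (Fintype.equivFinOfCardEq ((H.card_neighborSet_eq_degree c).trans hc)).symm
  have hcover' : ∀ v ≠ c, ∃ i, v ∈ (Q (e i)).support := fun v hv => by
    obtain ⟨n, hn⟩ := hcover v hv
    obtain ⟨i, rfl⟩ := e.surjective n
    exact ⟨i, hn⟩
  exact ⟨c, _, _, hQ.comp e.injective, hcover',
    fun a b hab => hH.exists_mem_edges (fun i => hQ.isPath (e i)) hcover' hab⟩

theorem _root_.IsThreeLeggedSpider.containsCopy [Fintype W] [DecidableRel H.Adj]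
    (hH : IsThreeLeggedSpider H) (hminor : H.IsMinorOf G) : ContainsCopy H G := by
  obtain ⟨c, t, Q, hQ, hcover, hedges⟩ := hH.exists_isSpider
  obtain ⟨S, hS⟩ := hminor.exists_isMinorModel
  obtain ⟨x, b, L, hL, hlen⟩ := hS.exists_isSpider hQ
  exact containsCopy_of_isSpider hQ hcover hedges hL hlen

end SimpleGraph

theorem stmt4_general {W V : Type*} [Fintype W] (H : SimpleGraph W) [DecidableRel H.Adj]
    (G : SimpleGraph V)
    (hH : IsPathGraph H ∨ IsThreeLeggedSpider H)
    (hminor : H.IsMinorOf G) : ContainsCopy H G :=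
  hH.elim (IsPathGraph.containsCopy · hminor) (IsThreeLeggedSpider.containsCopy · hminor)

/-- If `H` is a path or a three-legged spider, then every graph containing `H` as a minor
contains `H` as a subgraph. -/
theorem stmt4 {W V : Type*} [Fintype W] [DecidableEq W] (H : SimpleGraph W) [DecidableRel H.Adj]
    (G : SimpleGraph V)
    (hH : IsPathGraph H ∨ IsThreeLeggedSpider H)
    (hminor : H.IsMinorOf G) : ContainsCopy H G :=
  stmt4_general H G hH hminor
end

section
/- Box game criterion: let a_1, …, a_k be the coin counts of k boxes and m a positive integer bias. Suppose for every nonempty S ⊆ [k] we have Σ_{j∈S} a_j > |S| · h_{|S|} · m, where h_i = Σ_{j=1}^i 1/j. If BoxMaker removes a total of m coins (distributed arbitrarily among the boxes) and then BoxBreaker removes the box currently containing the fewest coins, then the resulting coin counts a'_1, …, a'_{k−1} again satisfy Σ_{j∈S} a'_j > |S| · h_{|S|} · m for every nonempty S ⊆ [k−1]. In particular, no box is ever emptied. -/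
/-- The `i`-th harmonic number `h_i = ∑_{j=1}^i 1/j`. -/
noncomputable def harm (i : ℕ) : ℝ := ∑ j ∈ Finset.range i, (1 : ℝ) / (j + 1)

/-- Box game criterion: suppose the coin counts `a j` of `k` boxes satisfy
`∑_{j∈S} a j > |S|·h_{|S|}·m` for every nonempty `S`. If BoxMaker removes amounts
`c j ≥ 0` with total `m`, and BoxBreaker then deletes a box `i` with the fewest
remaining coins, the invariant still holds for every nonempty set of surviving boxes;
in particular no surviving box is empty. -/
theorem stmt10 (k : ℕ) (m : ℝ) (hm : 0 < m) (a c : Fin k → ℝ)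
    (hc : ∀ j, 0 ≤ c j) (hcsum : ∑ j, c j = m)
    (hinv : ∀ S : Finset (Fin k), S.Nonempty →
      (S.card : ℝ) * harm S.card * m < ∑ j ∈ S, a j)
    (i : Fin k) (hi : ∀ j, a i - c i ≤ a j - c j) :
    (∀ S : Finset (Fin k), S.Nonempty → i ∉ S →
      (S.card : ℝ) * harm S.card * m < ∑ j ∈ S, (a j - c j)) ∧
    ∀ j, j ≠ i → 0 < a j - c j := by
  have key : ∀ S : Finset (Fin k), S.Nonempty → i ∉ S →
      (S.card : ℝ) * harm S.card * m < ∑ j ∈ S, (a j - c j) := by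
    intro S hS hiS
    set s := S.card with hs
    have hspos : 0 < s := Finset.card_pos.mpr hS
    have hn1 : (1 : ℝ) ≤ (s : ℝ) := by exact_mod_cast hspos
    set T : Finset (Fin k) := insert i S with hT
    have hTcard : T.card = s + 1 := Finset.card_insert_of_notMem hiS
    -- sum of c over T is at most m
    have hcT : ∑ j ∈ T, c j ≤ m := by
      rw [← hcsum]
      exact Finset.sum_le_sum_of_subset_of_nonneg (Finset.subset_univ T)
        (fun j _ _ => hc j)
    -- invariant on T
    have hinvT : ((s : ℝ) + 1) * harm (s + 1) * m < ∑ j ∈ T, a j := by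
      have := hinv T ⟨i, Finset.mem_insert_self i S⟩
      rw [hTcard] at this
      push_cast at this
      exact this
    have hX1 : ((s : ℝ) + 1) * harm (s + 1) * m - m < ∑ j ∈ T, (a j - c j) := by
      rw [Finset.sum_sub_distrib]
      linarith
    -- min term bound
    have hX2 : ((s : ℝ) + 1) * (a i - c i) ≤ ∑ j ∈ T, (a j - c j) := by
      have := Finset.card_nsmul_le_sum T (fun j => a j - c j) (a i - c i)
        (fun j _ => hi j)
      rw [hTcard] at this
      push_cast [nsmul_eq_mul] at this
      linarith
    have hsum : ∑ j ∈ T, (a j - c j) = (a i - c i) + ∑ j ∈ S, (a j - c j) :=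
      Finset.sum_insert hiS
    have hharm : harm (s + 1) = harm s + 1 / ((s : ℝ) + 1) := by
      simp [harm, Finset.sum_range_succ]
    set X := ∑ j ∈ T, (a j - c j) with hXdef
    set D := a i - c i with hD
    have hX1' : ((s : ℝ) + 1) * harm s * m < X := by
      rw [hharm] at hX1
      have hne : (s : ℝ) + 1 ≠ 0 := by positivity
      have : ((s : ℝ) + 1) * (1 / ((s : ℝ) + 1)) * m = m := by
        field_simp
      nlinarith [hX1]
    -- goal : s * harm s * m < X - D
    have hgoal : (s : ℝ) * harm s * m < X - D := by
      nlinarith [hX1', hX2, mul_pos (lt_of_lt_of_le one_pos hn1)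
        (sub_pos.mpr hX1')]
    rw [Finset.sum_insert hiS] at hXdef
    linarith [hgoal]
  refine ⟨key, fun j hj => ?_⟩
  have h1 : harm 1 = 1 := by simp [harm]
  have := key {j} ⟨j, Finset.mem_singleton_self j⟩ (by simp [Ne.symm hj])
  simp [h1] at this
  linarith
end

section
/- Maintain an invariant for a graph process: at every time t, every connected component of Maker's graph M_t is a star with a distinguished head as its center, and every free edge connects two heads, at least one of which is isolated in M_t. If Maker claims a free edge uv where (wlog) u is isolated, and Breaker then claims all free edges incident to u and all free edges from v to heads of non-trivial components (making v the head of the merged component), then the invariant holds at time t+1. Moreover, the number of edges Breaker must claim in round t is at most (n − t) + t = n. -/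
/-- The pair `ab` is a free edge of the game: a proper edge of `K_n` claimed by neither
Maker (`M`) nor Breaker (`B`). -/
def IsFree {V : Type*} (M B : SimpleGraph V) (a b : V) : Prop :=
  a ≠ b ∧ ¬ M.Adj a b ∧ ¬ B.Adj a b

/-- The invariant: Maker's and Breaker's edges are disjoint; `H` is the set of heads;
heads are mutually non-adjacent in `M`; every non-head has exactly one `M`-neighbour,
which is a head (so every component of `M` is a star centered on its unique head); and
every free edge joins two heads, at least one of which is isolated in `M`. -/
def StarInv {V : Type*} (M B : SimpleGraph V) (H : Set V) : Prop :=
  Disjoint M.edgeSet B.edgeSet ∧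
  (∀ h₁ ∈ H, ∀ h₂ ∈ H, ¬ M.Adj h₁ h₂) ∧
  (∀ v ∉ H, ∃! w, M.Adj v w) ∧
  (∀ v ∉ H, ∀ w, M.Adj v w → w ∈ H) ∧
  (∀ a b, IsFree M B a b →
    a ∈ H ∧ b ∈ H ∧ ((∀ w, ¬ M.Adj a w) ∨ (∀ w, ¬ M.Adj b w)))

/-- If the invariant holds at time `t` (Maker having `t` edges on `n` vertices) and Maker
claims a free edge `uv` with `u` isolated, then after Breaker claims all free edges at
`u` and all free edges from `v` to heads of non-trivial components (and `v` becomes the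
head of the merged component, `u` ceasing to be a head), the invariant holds again;
moreover Breaker claims at most `(n − t) + t = n` edges in this round. -/
theorem stmt15 {V : Type*} [Fintype V] [DecidableEq V] (M B : SimpleGraph V)
    [DecidableRel M.Adj] (H : Set V) (n t : ℕ)
    (hn : Fintype.card V = n) (ht : M.edgeFinset.card = t)
    (hinv : StarInv M B H) (u v : V) (hfree : IsFree M B u v) (hu : ∀ w, ¬ M.Adj u w) :
    let claimed : Set (Sym2 V) :=
      ({e | ∃ w, e = s(u, w) ∧ IsFree M B u w} ∪
        {e | ∃ h, e = s(v, h) ∧ IsFree M B v h ∧ h ∈ H ∧ ∃ x, M.Adj h x}) \ {s(u, v)}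
    StarInv (M ⊔ SimpleGraph.fromEdgeSet {s(u, v)})
        (B ⊔ SimpleGraph.fromEdgeSet claimed) (H \ {u}) ∧
      claimed.ncard ≤ n := by
  classical
  intro claimed
  obtain ⟨hdisj, hhead, hleaf, hlh, hF⟩ := hinv
  obtain ⟨huv, hMuv, hBuv⟩ := hfree
  obtain ⟨huH, hvH, -⟩ := hF u v ⟨huv, hMuv, hBuv⟩
  have hclaimed : ∀ e, e ∈ claimed ↔ ((∃ w, e = s(u, w) ∧ IsFree M B u w) ∨
      (∃ h, e = s(v, h) ∧ IsFree M B v h ∧ h ∈ H ∧ ∃ x, M.Adj h x)) ∧ e ≠ s(u, v) :=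
    fun e => Iff.rfl
  have hM' : ∀ a b, (M ⊔ SimpleGraph.fromEdgeSet {s(u, v)}).Adj a b ↔
      M.Adj a b ∨ (a = u ∧ b = v) ∨ (a = v ∧ b = u) := by
    intro a b
    simp only [SimpleGraph.sup_adj, SimpleGraph.fromEdgeSet_adj, Set.mem_singleton_iff,
      Sym2.eq_iff]
    constructor
    · rintro (h | ⟨(⟨rfl, rfl⟩ | ⟨rfl, rfl⟩), hne⟩) <;> tauto
    · rintro (h | ⟨rfl, rfl⟩ | ⟨rfl, rfl⟩)
      · exact Or.inl h
      · exact Or.inr ⟨Or.inl ⟨rfl, rfl⟩, huv⟩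
      · exact Or.inr ⟨Or.inr ⟨rfl, rfl⟩, huv.symm⟩
  -- claimed edges are free edges of the old position, distinct from s(u,v)
  have hCl : ∀ e ∈ claimed, e ≠ s(u, v) ∧ ∃ a b, e = s(a, b) ∧ IsFree M B a b := by
    intro e he
    rw [hclaimed] at he
    rcases he with ⟨⟨w, rfl, hfw⟩ | ⟨h, rfl, hfh, -⟩, hne⟩
    · exact ⟨hne, u, w, rfl, hfw⟩
    · exact ⟨hne, v, h, rfl, hfh⟩
  have hCuw : ∀ w, w ≠ v → IsFree M B u w → s(u, w) ∈ claimed := by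
    intro w hwv hfw
    rw [hclaimed]
    refine ⟨Or.inl ⟨w, rfl, hfw⟩, ?_⟩
    rw [ne_eq, Sym2.eq_iff]
    rintro (⟨-, h1⟩ | ⟨h2, -⟩)
    exacts [hwv h1, huv h2]
  have hCvh : ∀ h, h ≠ u → IsFree M B v h → h ∈ H → (∃ x, M.Adj h x) → s(v, h) ∈ claimed := by
    intro h hhu hf hH hx
    rw [hclaimed]
    refine ⟨Or.inr ⟨h, rfl, hf, hH, hx⟩, ?_⟩
    rw [ne_eq, Sym2.eq_iff]
    rintro (⟨h1, -⟩ | ⟨-, h2⟩)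
    exacts [huv h1.symm, hhu h2]
  refine ⟨⟨?_, ?_, ?_, ?_, ?_⟩, ?_⟩
  · -- disjointness
    refine Set.disjoint_left.mpr ?_
    intro e he hb
    rw [SimpleGraph.edgeSet_sup] at he hb
    rw [SimpleGraph.edgeSet_fromEdgeSet] at he hb
    rcases he with he | he
    · rcases hb with hb | hb
      · exact Set.disjoint_left.mp hdisj he hb
      · obtain ⟨-, a, b, rfl, -, hM, -⟩ := hCl e hb.1
        rw [SimpleGraph.mem_edgeSet] at he
        exact hM he
    · have he' : e = s(u, v) := he.1
      subst he'
      rcases hb with hb | hb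
      · exact hBuv hb
      · exact (hCl _ hb.1).1 rfl
  · -- heads mutually nonadjacent
    intro h₁ hh₁ h₂ hh₂ hadj
    rw [hM'] at hadj
    rcases hadj with h | ⟨h1, -⟩ | ⟨-, h2⟩
    · exact hhead h₁ hh₁.1 h₂ hh₂.1 h
    · exact hh₁.2 h1
    · exact hh₂.2 h2
  · -- every non-head has a unique neighbour
    intro x hx
    by_cases hxu : x = u
    · subst hxu
      refine ⟨v, (hM' x v).mpr (Or.inr (Or.inl ⟨rfl, rfl⟩)), ?_⟩
      intro y hy
      rw [hM'] at hy
      rcases hy with h | ⟨-, rfl⟩ | ⟨hxv, -⟩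
      · exact absurd h (hu y)
      · rfl
      · exact absurd hxv huv
    · have hxH : x ∉ H := fun h => hx ⟨h, hxu⟩
      have hxv : x ≠ v := fun h => hxH (h ▸ hvH)
      obtain ⟨w, hw, hw'⟩ := hleaf x hxH
      refine ⟨w, (hM' x w).mpr (Or.inl hw), ?_⟩
      intro y hy
      rw [hM'] at hy
      rcases hy with h | ⟨h, -⟩ | ⟨h, -⟩
      · exact hw' y h
      · exact absurd h hxu
      · exact absurd h hxv
  · -- neighbours of non-heads are heads
    intro x hx w hw
    rw [hM'] at hw
    by_cases hxu : x = u
    · subst hxu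
      rcases hw with h | ⟨-, rfl⟩ | ⟨h, -⟩
      · exact absurd h (hu w)
      · exact ⟨hvH, fun h => huv h.symm⟩
      · exact absurd h huv
    · have hxH : x ∉ H := fun h => hx ⟨h, hxu⟩
      have hxv : x ≠ v := fun h => hxH (h ▸ hvH)
      rcases hw with h | ⟨h, -⟩ | ⟨h, -⟩
      · refine ⟨hlh x hxH w h, ?_⟩
        intro hwu
        have hwu' : w = u := hwu
        exact hu x (hwu' ▸ h.symm)
      · exact absurd h hxu
      · exact absurd h hxv
  · -- free edges of the new position
    intro a b hab
    obtain ⟨hne, hM'ab, hB'ab⟩ := hab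
    rw [SimpleGraph.sup_adj, SimpleGraph.fromEdgeSet_adj] at hB'ab
    push_neg at hB'ab
    have hMab : ¬ M.Adj a b := fun h => hM'ab ((hM' a b).mpr (Or.inl h))
    have hBab : ¬ B.Adj a b := hB'ab.1
    have hCab : s(a, b) ∉ claimed := fun h => hne (hB'ab.2 h)
    have hnsuv : ¬ ((a = u ∧ b = v) ∨ (a = v ∧ b = u)) :=
      fun h => hM'ab ((hM' a b).mpr (Or.inr h))
    obtain ⟨haH, hbH, hiso⟩ := hF a b ⟨hne, hMab, hBab⟩
    have hau : a ≠ u := by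
      intro ha
      have hbv : b ≠ v := fun h => hnsuv (Or.inl ⟨ha, h⟩)
      have hmem : s(u, b) ∈ claimed := hCuw b hbv ⟨ha ▸ hne, ha ▸ hMab, ha ▸ hBab⟩
      exact hCab (ha.symm ▸ hmem)
    have hbu : b ≠ u := by
      intro hb
      have hav : a ≠ v := fun h => hnsuv (Or.inr ⟨h, hb⟩)
      have hmem : s(u, a) ∈ claimed :=
        hCuw a hav ⟨hb ▸ hne.symm, hb ▸ (fun h => hMab h.symm : ¬ M.Adj b a),
          hb ▸ (fun h => hBab h.symm : ¬ B.Adj b a)⟩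
      rw [Sym2.eq_swap] at hmem
      exact hCab (hb.symm ▸ hmem)
    refine ⟨⟨haH, hau⟩, ⟨hbH, hbu⟩, ?_⟩
    have hisoM' : ∀ x, x ≠ u → x ≠ v → (∀ w, ¬ M.Adj x w) →
        ∀ w, ¬ (M ⊔ SimpleGraph.fromEdgeSet {s(u, v)}).Adj x w := by
      intro x hxu hxv hx w hw
      rw [hM'] at hw
      rcases hw with h | ⟨h, -⟩ | ⟨h, -⟩
      exacts [hx w h, hxu h, hxv h]
    by_cases hav : a = v
    · subst hav
      refine Or.inr (hisoM' b hbu hne.symm ?_)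
      by_contra hc
      push_neg at hc
      obtain ⟨x, hx⟩ := hc
      exact hCab (hCvh b hbu ⟨hne, hMab, hBab⟩ hbH ⟨x, hx⟩)
    · by_cases hbv : b = v
      · refine Or.inl (hisoM' a hau hav ?_)
        by_contra hc
        push_neg at hc
        obtain ⟨x, hx⟩ := hc
        have hmem : s(v, a) ∈ claimed :=
          hCvh a hau ⟨hbv ▸ hne.symm, hbv ▸ (fun h => hMab h.symm : ¬ M.Adj b a),
            hbv ▸ (fun h => hBab h.symm : ¬ B.Adj b a)⟩ haH ⟨x, hx⟩
        rw [Sym2.eq_swap] at hmem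
        exact hCab (hbv.symm ▸ hmem)
      · rcases hiso with hia | hib
        · exact Or.inl (hisoM' a hau hav hia)
        · exact Or.inr (hisoM' b hbu hbv hib)
  · -- cardinality bound
    set Hnt : Set V := {h | h ∈ H ∧ ∃ x, M.Adj h x} with hHnt
    have hsub : claimed ⊆ (fun w => s(u, w)) '' H ∪ (fun h => s(v, h)) '' Hnt := by
      intro e he
      rw [hclaimed] at he
      rcases he.1 with ⟨w, rfl, hfw⟩ | ⟨h, rfl, hfh, hH, hx⟩
      · exact Or.inl ⟨w, (hF u w hfw).2.1, rfl⟩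
      · exact Or.inr ⟨h, ⟨hH, hx⟩, rfl⟩
    have h1 : claimed.ncard ≤
        ((fun w => s(u, w)) '' H).ncard + ((fun h => s(v, h)) '' Hnt).ncard :=
      le_trans (Set.ncard_le_ncard hsub (Set.toFinite _)) (Set.ncard_union_le _ _)
    have h2 : ((fun w => s(u, w)) '' H).ncard ≤ H.ncard := Set.ncard_image_le (Set.toFinite _)
    have h3 : ((fun h => s(v, h)) '' Hnt).ncard ≤ Hnt.ncard := Set.ncard_image_le (Set.toFinite _)
    have h4 : Hnt.ncard ≤ Hᶜ.ncard := by
      refine Set.ncard_le_ncard_of_injOn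
        (fun h => if hx : ∃ x, M.Adj h x then hx.choose else h) ?_ ?_ (Set.toFinite _)
      · intro h hh
        show (if hx : ∃ x, M.Adj h x then hx.choose else h) ∈ Hᶜ
        rw [dif_pos hh.2]
        intro hmem
        exact hhead h hh.1 _ hmem hh.2.choose_spec
      · intro h₁ hh₁ h₂ hh₂ heq
        simp only [dif_pos hh₁.2, dif_pos hh₂.2] at heq
        have hx1 : M.Adj h₁ hh₁.2.choose := hh₁.2.choose_spec
        have hx2 : M.Adj h₂ hh₁.2.choose := heq.symm ▸ hh₂.2.choose_spec
        have hxH : hh₁.2.choose ∉ H := fun h => hhead h₁ hh₁.1 _ h hx1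
        obtain ⟨w, -, hw⟩ := hleaf _ hxH
        exact (hw h₁ hx1.symm).trans (hw h₂ hx2.symm).symm
    have h5 : H.ncard + Hᶜ.ncard = n := by
      rw [← hn, ← Nat.card_eq_fintype_card]
      exact Set.ncard_add_ncard_compl H
    omega
end
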